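/- arXiv:0706.3282 — 2 statements merged into one kernel-verified Lean document; each statement's English description precedes it below -/
import Mathlib

section
/- Let A and H be Lie bialgebras and (A, H, ▷, ◁) a matched pair of Lie algebras. Assume A is a left H-module Lie coalgebra, i.e. δ_A(h ▷ a) = h ▷ a₁ ⊗ a₂ + a₁ ⊗ h ▷ a₂, and H is a right A-module Lie coalgebra, i.e. δ_H(h ◁ a) = h₁ ◁ a ⊗ h₂ + h₁ ⊗ h₂ ◁ a, and that condition (AA1) holds: h₁ ⊗ (h₂ ▷ a) + (h ◁ a₁) ⊗ a₂ = 0 in H ⊗ A for all h ∈ H, a ∈ A. Then the double cross sum A ⋈ H, namely the vector space A ⊕ H with bracket [(a,h),(b,g)] = ([a,b] + h ▷ b − g ▷ a, [h,g] + h ◁ b − g ◁ a) and with the direct sum cobracket δ(a,h) = δ_A(a) + δ_H(h), is a Lie bialgebra. -/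
/-! When the bracket is antisymmetric, (LB) says exactly that `δ` is a 1-cocycle,
`δ[x, y] = x • δ y - y • δ x`, for the adjoint action `x • (u ⊗ v) = [x, u] ⊗ v + u ⊗ [x, v]`
on `L ⊗ L`. Both sides are bilinear and antisymmetric in `(x, y)`, so on `A ⋈ H` it suffices to
check the pairs `(a, b)`, `(h, b)` and `(h, g)`. On `A` and on `H` the cocycle identity is
transported along the inclusions, which preserve bracket and cobracket. For `(h, b)` the
components of `δ[h, b]` in `A ⊗ A` and `H ⊗ H` are given by the module-coalgebra conditions, while
the mixed components in `H ⊗ A` and `A ⊗ H` are (AA1) and its image under `τ`.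

The Jacobi identity on `A ⋈ H` is a linear combination of the matched-pair axioms, and co-Jacobi
holds because the inclusions of `A` and `H` preserve cobrackets and the co-Jacobiator is natural
for such maps. -/

open TensorProduct

noncomputable section

variable {k : Type*} [Field k]
variable {A H : Type*} [AddCommGroup A] [Module k A] [AddCommGroup H] [Module k H]

/-- The cyclic rotation `ξ : u ⊗ v ⊗ w ↦ v ⊗ w ⊗ u` on `(L ⊗ L) ⊗ L`. -/
def ξmap (k L : Type*) [Field k] [AddCommGroup L] [Module k L] :
    ((L ⊗[k] L) ⊗[k] L) →ₗ[k] ((L ⊗[k] L) ⊗[k] L) :=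
  (TensorProduct.comm k L (L ⊗[k] L)).toLinearMap ∘ₗ (TensorProduct.assoc k L L L).toLinearMap

/-- Swap the last two tensor factors: `(m ⊗ n) ⊗ p ↦ (m ⊗ p) ⊗ n`. -/
def swapR (k M N P : Type*) [Field k] [AddCommGroup M] [Module k M] [AddCommGroup N]
    [Module k N] [AddCommGroup P] [Module k P] :
    ((M ⊗[k] N) ⊗[k] P) →ₗ[k] ((M ⊗[k] P) ⊗[k] N) :=
  (TensorProduct.assoc k M P N).symm.toLinearMap
    ∘ₗ TensorProduct.map LinearMap.id (TensorProduct.comm k N P).toLinearMap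
    ∘ₗ (TensorProduct.assoc k M N P).toLinearMap

/-- A bilinear bracket is a Lie algebra structure: antisymmetry and the Jacobi identity. -/
def IsLieAlg {L : Type*} [AddCommGroup L] [Module k L] (br : L →ₗ[k] L →ₗ[k] L) : Prop :=
  (∀ x y, br x y = - br y x) ∧
  (∀ x y z, br (br x y) z + br (br y z) x + br (br z x) y = 0)

/-- A cobracket is a Lie coalgebra structure: coanticommutativity `τ ∘ δ = −δ` and the
co-Jacobi identity `(id + ξ + ξ²) ∘ (δ ⊗ id) ∘ δ = 0`. -/
def IsLieCoalg {L : Type*} [AddCommGroup L] [Module k L] (δ : L →ₗ[k] L ⊗[k] L) : Prop :=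
  (∀ x, TensorProduct.comm k L L (δ x) = - δ x) ∧
  (∀ x, TensorProduct.map δ LinearMap.id (δ x)
      + ξmap k L (TensorProduct.map δ LinearMap.id (δ x))
      + ξmap k L (ξmap k L (TensorProduct.map δ LinearMap.id (δ x))) = 0)

/-- A Lie bialgebra: simultaneously a Lie algebra and a Lie coalgebra satisfying (LB):
`δ[x,y] = [x,y₁]⊗y₂ + y₁⊗[x,y₂] + x₁⊗[x₂,y] + [x₁,y]⊗x₂` (Sweedler notation). -/
def IsLieBialg {L : Type*} [AddCommGroup L] [Module k L]
    (br : L →ₗ[k] L →ₗ[k] L) (δ : L →ₗ[k] L ⊗[k] L) : Prop :=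
  IsLieAlg br ∧ IsLieCoalg δ ∧
  ∀ x y, δ (br x y)
      = TensorProduct.map (br x) LinearMap.id (δ y)
      + TensorProduct.map LinearMap.id (br x) (δ y)
      + TensorProduct.map LinearMap.id (br.flip y) (δ x)
      + TensorProduct.map (br.flip y) LinearMap.id (δ x)

/-- The bracket on the direct sum `A ⊕ H`:
`[(a,h),(b,g)] = ([a,b] + h▷b − g▷a + σ(h,g), [h,g] + h◁b − g◁a + θ(a,b))`. -/
def bbBracket (brA : A →ₗ[k] A →ₗ[k] A) (brH : H →ₗ[k] H →ₗ[k] H)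
    (r : H →ₗ[k] A →ₗ[k] A) (l : H →ₗ[k] A →ₗ[k] H)
    (σ : H →ₗ[k] H →ₗ[k] A) (θ : A →ₗ[k] A →ₗ[k] H) :
    (A × H) →ₗ[k] (A × H) →ₗ[k] (A × H) :=
  LinearMap.mk₂ k
    (fun x y => (brA x.1 y.1 + r x.2 y.1 - r y.2 x.1 + σ x.2 y.2,
                 brH x.2 y.2 + l x.2 y.1 - l y.2 x.1 + θ x.1 y.1))
    (fun x x' y => by
      simp only [Prod.fst_add, Prod.snd_add, map_add, LinearMap.add_apply, Prod.mk_add_mk,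
        Prod.mk.injEq]
      all_goals try (constructor <;> abel))
    (fun c x y => by
      simp only [Prod.smul_fst, Prod.smul_snd, map_smul, LinearMap.smul_apply, Prod.smul_mk,
        Prod.mk.injEq, smul_add, smul_sub]
      all_goals try (constructor <;> abel))
    (fun x y y' => by
      simp only [Prod.fst_add, Prod.snd_add, map_add, LinearMap.add_apply, Prod.mk_add_mk,
        Prod.mk.injEq]
      all_goals try (constructor <;> abel))
    (fun c x y => by
      simp only [Prod.smul_fst, Prod.smul_snd, map_smul, LinearMap.smul_apply, Prod.smul_mk,
        Prod.mk.injEq, smul_add, smul_sub]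
      all_goals try (constructor <;> abel))

/-- The cobracket on the direct sum `A ⊕ H`:
`δ_D(a) = δ_A(a) + φ(a) − τφ(a) + P(a)` and `δ_D(h) = δ_H(h) + ψ(h) − τψ(h) + Q(h)`,
all terms viewed inside `(A ⊕ H) ⊗ (A ⊕ H)`. -/
def bbCobracket (δA : A →ₗ[k] A ⊗[k] A) (δH : H →ₗ[k] H ⊗[k] H)
    (φ : A →ₗ[k] H ⊗[k] A) (ψ : H →ₗ[k] H ⊗[k] A)
    (P : A →ₗ[k] H ⊗[k] H) (Q : H →ₗ[k] A ⊗[k] A) :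
    (A × H) →ₗ[k] (A × H) ⊗[k] (A × H) :=
  (TensorProduct.map (LinearMap.inl k A H) (LinearMap.inl k A H) ∘ₗ δA
    + TensorProduct.map (LinearMap.inr k A H) (LinearMap.inl k A H) ∘ₗ φ
    - TensorProduct.map (LinearMap.inl k A H) (LinearMap.inr k A H)
        ∘ₗ (TensorProduct.comm k H A).toLinearMap ∘ₗ φ
    + TensorProduct.map (LinearMap.inr k A H) (LinearMap.inr k A H) ∘ₗ P) ∘ₗ LinearMap.fst k A H
  + (TensorProduct.map (LinearMap.inr k A H) (LinearMap.inr k A H) ∘ₗ δH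
    + TensorProduct.map (LinearMap.inr k A H) (LinearMap.inl k A H) ∘ₗ ψ
    - TensorProduct.map (LinearMap.inl k A H) (LinearMap.inr k A H)
        ∘ₗ (TensorProduct.comm k H A).toLinearMap ∘ₗ ψ
    + TensorProduct.map (LinearMap.inl k A H) (LinearMap.inl k A H) ∘ₗ Q) ∘ₗ LinearMap.snd k A H


lemma TensorProduct.map_neg_left {R M N P Q : Type*} [CommRing R] [AddCommGroup M] [Module R M]
    [AddCommGroup N] [Module R N] [AddCommGroup P] [Module R P] [AddCommGroup Q] [Module R Q]
    (f : M →ₗ[R] P) (g : N →ₗ[R] Q) : TensorProduct.map (-f) g = -TensorProduct.map f g := by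
  ext
  simp [TensorProduct.neg_tmul]

lemma TensorProduct.map_neg_right {R M N P Q : Type*} [CommRing R] [AddCommGroup M] [Module R M]
    [AddCommGroup N] [Module R N] [AddCommGroup P] [Module R P] [AddCommGroup Q] [Module R Q]
    (f : M →ₗ[R] P) (g : N →ₗ[R] Q) : TensorProduct.map f (-g) = -TensorProduct.map f g := by
  ext
  simp [TensorProduct.tmul_neg]

lemma LinearMap.inl_fst_add_inr_snd {R M N : Type*} [Semiring R] [AddCommMonoid M] [Module R M]
    [AddCommMonoid N] [Module R N] (x : M × N) :
    LinearMap.inl R M N x.1 + LinearMap.inr R M N x.2 = x := by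
  simp

section LieCoalgebra

variable {L M : Type*} [AddCommGroup L] [Module k L] [AddCommGroup M] [Module k M]

def coJacobiator (δ : L →ₗ[k] L ⊗[k] L) : L →ₗ[k] (L ⊗[k] L) ⊗[k] L :=
  (LinearMap.id + ξmap k L + ξmap k L ∘ₗ ξmap k L) ∘ₗ TensorProduct.map δ LinearMap.id ∘ₗ δ

lemma isLieCoalg_iff (δ : L →ₗ[k] L ⊗[k] L) :
    IsLieCoalg δ ↔
      (∀ x, TensorProduct.comm k L L (δ x) = - δ x) ∧ ∀ x, coJacobiator δ x = 0 :=
  Iff.rfl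

lemma ξmap_comp_map (e : L →ₗ[k] M) :
    ξmap k M ∘ₗ TensorProduct.map (TensorProduct.map e e) e
      = TensorProduct.map (TensorProduct.map e e) e ∘ₗ ξmap k L := by
  ext
  simp [ξmap]

lemma coJacobiator_comp {δL : L →ₗ[k] L ⊗[k] L} {δM : M →ₗ[k] M ⊗[k] M} {e : L →ₗ[k] M}
    (hδ : ∀ x, δM (e x) = TensorProduct.map e e (δL x)) :
    coJacobiator δM ∘ₗ e = TensorProduct.map (TensorProduct.map e e) e ∘ₗ coJacobiator δL := by
  have he : δM ∘ₗ e = TensorProduct.map e e ∘ₗ δL := LinearMap.ext hδ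
  have hmap : TensorProduct.map δM LinearMap.id ∘ₗ TensorProduct.map e e
      = TensorProduct.map (TensorProduct.map e e) e ∘ₗ TensorProduct.map δL LinearMap.id := by
    rw [← TensorProduct.map_comp, ← TensorProduct.map_comp, he, LinearMap.id_comp,
      LinearMap.comp_id]
  have hJ : (LinearMap.id + ξmap k M + ξmap k M ∘ₗ ξmap k M)
        ∘ₗ TensorProduct.map (TensorProduct.map e e) e
      = TensorProduct.map (TensorProduct.map e e) e
        ∘ₗ (LinearMap.id + ξmap k L + ξmap k L ∘ₗ ξmap k L) := by
    simp only [LinearMap.add_comp, LinearMap.comp_add, LinearMap.id_comp, LinearMap.comp_id,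
      LinearMap.comp_assoc, ξmap_comp_map]
    simp only [← LinearMap.comp_assoc, ξmap_comp_map]
  simp only [coJacobiator, LinearMap.comp_assoc, he]
  rw [← LinearMap.comp_assoc δL, hmap, LinearMap.comp_assoc, ← LinearMap.comp_assoc _ _ (_ + _),
    hJ, LinearMap.comp_assoc]

end LieCoalgebra

section Cocycle

variable {L M : Type*} [AddCommGroup L] [Module k L] [AddCommGroup M] [Module k M]

def adTensor (br : L →ₗ[k] L →ₗ[k] L) (x : L) : L ⊗[k] L →ₗ[k] L ⊗[k] L :=
  (br x).rTensor L + (br x).lTensor L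

lemma adTensor_add (br : L →ₗ[k] L →ₗ[k] L) (x y : L) :
    adTensor br (x + y) = adTensor br x + adTensor br y := by
  simp only [adTensor, map_add, LinearMap.rTensor_add, LinearMap.lTensor_add]
  abel

lemma isLieBialg_iff_cocycle {br : L →ₗ[k] L →ₗ[k] L} {δ : L →ₗ[k] L ⊗[k] L} (hbr : IsLieAlg br) :
    IsLieBialg br δ ↔
      IsLieCoalg δ ∧ ∀ x y, δ (br x y) = adTensor br x (δ y) - adTensor br y (δ x) := by
  have hflip : ∀ y, br.flip y = -br y := fun y => LinearMap.ext fun x => hbr.1 x y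
  have hLB : ∀ x y, TensorProduct.map (br x) LinearMap.id (δ y)
      + TensorProduct.map LinearMap.id (br x) (δ y)
      + TensorProduct.map LinearMap.id (br.flip y) (δ x)
      + TensorProduct.map (br.flip y) LinearMap.id (δ x)
      = adTensor br x (δ y) - adTensor br y (δ x) := by
    intro x y
    simp only [hflip, adTensor, ← LinearMap.rTensor_def, ← LinearMap.lTensor_def,
      LinearMap.rTensor_neg, LinearMap.lTensor_neg, LinearMap.add_apply, LinearMap.neg_apply]
    abel
  simp only [IsLieBialg, hbr, hLB, true_and]

lemma cocycle_swap {br : L →ₗ[k] L →ₗ[k] L} {δ : L →ₗ[k] L ⊗[k] L}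
    (hanti : ∀ x y, br x y = - br y x) {x y : L}
    (h : δ (br y x) = adTensor br y (δ x) - adTensor br x (δ y)) :
    δ (br x y) = adTensor br x (δ y) - adTensor br y (δ x) := by
  rw [hanti, map_neg, h, neg_sub]

lemma adTensor_map {brL : L →ₗ[k] L →ₗ[k] L} {brM : M →ₗ[k] M →ₗ[k] M} {e : L →ₗ[k] M}
    (he : ∀ x y, brM (e x) (e y) = e (brL x y)) (x : L) (t : L ⊗[k] L) :
    adTensor brM (e x) (TensorProduct.map e e t) = TensorProduct.map e e (adTensor brL x t) := by
  induction t using TensorProduct.induction_on with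
  | zero => simp
  | tmul y z => simp [adTensor, he]
  | add s t hs ht => simp only [map_add, hs, ht]

lemma cocycle_map {brL : L →ₗ[k] L →ₗ[k] L} {brM : M →ₗ[k] M →ₗ[k] M}
    {δL : L →ₗ[k] L ⊗[k] L} {δM : M →ₗ[k] M ⊗[k] M} {e : L →ₗ[k] M}
    (he : ∀ x y, brM (e x) (e y) = e (brL x y))
    (hδ : ∀ x, δM (e x) = TensorProduct.map e e (δL x)) {x y : L}
    (h : δL (brL x y) = adTensor brL x (δL y) - adTensor brL y (δL x)) :
    δM (brM (e x) (e y)) = adTensor brM (e x) (δM (e y)) - adTensor brM (e y) (δM (e x)) := by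
  rw [he, hδ, hδ, hδ, h, map_sub, adTensor_map he, adTensor_map he]

lemma cocycle_of_inl_inr {V W : Type*} [AddCommGroup V] [Module k V] [AddCommGroup W]
    [Module k W] {br : V × W →ₗ[k] V × W →ₗ[k] V × W} {δ : V × W →ₗ[k] (V × W) ⊗[k] (V × W)}
    (hanti : ∀ x y, br x y = - br y x)
    (hll : ∀ a b, δ (br (LinearMap.inl k V W a) (LinearMap.inl k V W b))
      = adTensor br (LinearMap.inl k V W a) (δ (LinearMap.inl k V W b))
        - adTensor br (LinearMap.inl k V W b) (δ (LinearMap.inl k V W a)))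
    (hrl : ∀ h b, δ (br (LinearMap.inr k V W h) (LinearMap.inl k V W b))
      = adTensor br (LinearMap.inr k V W h) (δ (LinearMap.inl k V W b))
        - adTensor br (LinearMap.inl k V W b) (δ (LinearMap.inr k V W h)))
    (hrr : ∀ h g, δ (br (LinearMap.inr k V W h) (LinearMap.inr k V W g))
      = adTensor br (LinearMap.inr k V W h) (δ (LinearMap.inr k V W g))
        - adTensor br (LinearMap.inr k V W g) (δ (LinearMap.inr k V W h)))
    (x y : V × W) :
    δ (br x y) = adTensor br x (δ y) - adTensor br y (δ x) := by
  rw [← LinearMap.inl_fst_add_inr_snd (R := k) x, ← LinearMap.inl_fst_add_inr_snd (R := k) y]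
  simp only [map_add, LinearMap.add_apply, adTensor_add]
  rw [hll, hrl, hrr, cocycle_swap hanti (hrl _ _)]
  abel

end Cocycle

section DoubleCrossSum

variable (brA : A →ₗ[k] A →ₗ[k] A) (brH : H →ₗ[k] H →ₗ[k] H)
  (r : H →ₗ[k] A →ₗ[k] A) (l : H →ₗ[k] A →ₗ[k] H)
  (δA : A →ₗ[k] A ⊗[k] A) (δH : H →ₗ[k] H ⊗[k] H)

local notation "brD" => bbBracket brA brH r l 0 0
local notation "δD" => bbCobracket δA δH 0 0 0 0

@[simp]
lemma bbBracket_apply (x y : A × H) :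
    brD x y
      = (brA x.1 y.1 + r x.2 y.1 - r y.2 x.1, brH x.2 y.2 + l x.2 y.1 - l y.2 x.1) := by
  simp [bbBracket]

lemma bbBracket_inl_inl (a b : A) :
    brD (LinearMap.inl k A H a) (LinearMap.inl k A H b) = LinearMap.inl k A H (brA a b) := by
  simp

lemma bbBracket_inr_inr (h g : H) :
    brD (LinearMap.inr k A H h) (LinearMap.inr k A H g) = LinearMap.inr k A H (brH h g) := by
  simp

lemma isLieAlg_bbBracket (hA : IsLieAlg brA) (hH : IsLieAlg brH)
    (hmodA : ∀ h g a, r (brH h g) a = r h (r g a) - r g (r h a))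
    (hmodH : ∀ h a b, l h (brA a b) = l (l h a) b - l (l h b) a)
    (hBB1 : ∀ h a b, r h (brA a b)
        = brA (r h a) b + brA a (r h b) + r (l h a) b - r (l h b) a)
    (hBB2 : ∀ h g a, l (brH h g) a
        = brH h (l g a) + brH (l h a) g + l h (r g a) - l g (r h a)) :
    IsLieAlg brD := by
  obtain ⟨hA_anti, hA_jacobi⟩ := hA
  obtain ⟨hH_anti, hH_jacobi⟩ := hH
  constructor
  · rintro ⟨a, h⟩ ⟨b, g⟩
    simp only [bbBracket_apply, Prod.neg_mk, Prod.mk.injEq]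
    exact ⟨by linear_combination (norm := module) hA_anti a b,
      by linear_combination (norm := module) hH_anti h g⟩
  · rintro ⟨a, h⟩ ⟨b, g⟩ ⟨c, f⟩
    simp only [bbBracket_apply, map_add, map_sub, LinearMap.add_apply, LinearMap.sub_apply,
      Prod.mk_add_mk, Prod.mk_eq_zero]
    constructor
    · linear_combination (norm := module) hA_jacobi a b c + hmodA h g c + hmodA g f a
        + hmodA f h b - hBB1 f a b - hBB1 h b c - hBB1 g c a
        - hA_anti a (r f b) - hA_anti b (r h c) - hA_anti c (r g a)
    · linear_combination (norm := module) hH_jacobi h g f + hBB2 h g c + hBB2 g f a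
        + hBB2 f h b - hmodH f a b - hmodH h b c - hmodH g c a
        + hH_anti h (l g c) + hH_anti g (l f a) + hH_anti f (l h b)

lemma bbCobracket_apply (x : A × H) :
    δD x
      = TensorProduct.map (LinearMap.inl k A H) (LinearMap.inl k A H) (δA x.1)
        + TensorProduct.map (LinearMap.inr k A H) (LinearMap.inr k A H) (δH x.2) := by
  simp [bbCobracket]

lemma bbCobracket_inl (a : A) :
    δD (LinearMap.inl k A H a)
      = TensorProduct.map (LinearMap.inl k A H) (LinearMap.inl k A H) (δA a) := by
  simp [bbCobracket_apply]

lemma bbCobracket_inr (h : H) :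
    δD (LinearMap.inr k A H h)
      = TensorProduct.map (LinearMap.inr k A H) (LinearMap.inr k A H) (δH h) := by
  simp [bbCobracket_apply]

lemma isLieCoalg_bbCobracket (hA : IsLieCoalg δA) (hH : IsLieCoalg δH) :
    IsLieCoalg δD := by
  rw [isLieCoalg_iff] at hA hH ⊢
  obtain ⟨hA_anti, hA_jacobi⟩ := hA
  obtain ⟨hH_anti, hH_jacobi⟩ := hH
  constructor
  · intro x
    rw [bbCobracket_apply, map_add, ← TensorProduct.map_comm, ← TensorProduct.map_comm,
      hA_anti, hH_anti, map_neg, map_neg, neg_add]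
  · intro x
    have hinl := LinearMap.congr_fun (coJacobiator_comp (bbCobracket_inl δA δH)) x.1
    have hinr := LinearMap.congr_fun (coJacobiator_comp (bbCobracket_inr δA δH)) x.2
    rw [← LinearMap.inl_fst_add_inr_snd (R := k) x, map_add]
    simp only [LinearMap.comp_apply] at hinl hinr
    rw [hinl, hinr, hA_jacobi, hH_jacobi, map_zero, map_zero, add_zero]

lemma bbBracket_inr_comp_inl (h : H) :
    brD (LinearMap.inr k A H h) ∘ₗ LinearMap.inl k A H
      = LinearMap.inl k A H ∘ₗ r h + LinearMap.inr k A H ∘ₗ l h := by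
  ext <;> simp

lemma bbBracket_inl_comp_inr (b : A) :
    brD (LinearMap.inl k A H b) ∘ₗ LinearMap.inr k A H
      = -(LinearMap.inl k A H ∘ₗ r.flip b + LinearMap.inr k A H ∘ₗ l.flip b) := by
  ext <;> simp

lemma bbCobracket_cocycle_inr_inl (hA_anti : ∀ a, TensorProduct.comm k A A (δA a) = - δA a)
    (hH_anti : ∀ h, TensorProduct.comm k H H (δH h) = - δH h)
    (hcoA : ∀ h a, δA (r h a)
        = TensorProduct.map (r h) LinearMap.id (δA a)
        + TensorProduct.map LinearMap.id (r h) (δA a))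
    (hcoH : ∀ h a, δH (l h a)
        = TensorProduct.map (l.flip a) LinearMap.id (δH h)
        + TensorProduct.map LinearMap.id (l.flip a) (δH h))
    (hAA1 : ∀ h a, TensorProduct.map LinearMap.id (r.flip a) (δH h)
        + TensorProduct.map (l h) LinearMap.id (δA a) = 0) (h : H) (b : A) :
    δD (brD (LinearMap.inr k A H h) (LinearMap.inl k A H b))
      = adTensor brD (LinearMap.inr k A H h) (δD (LinearMap.inl k A H b))
        - adTensor brD (LinearMap.inl k A H b) (δD (LinearMap.inr k A H h)) := by
  have hAA1_flip : TensorProduct.map (r.flip b) LinearMap.id (δH h)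
      + TensorProduct.map LinearMap.id (l h) (δA b) = 0 := by
    have := congrArg (TensorProduct.comm k H A) (hAA1 h b)
    rwa [map_add, map_zero, ← TensorProduct.map_comm, ← TensorProduct.map_comm, hH_anti,
      hA_anti, map_neg, map_neg, ← neg_add, neg_eq_zero] at this
  have hbr : brD (LinearMap.inr k A H h) (LinearMap.inl k A H b)
      = LinearMap.inl k A H (r h b) + LinearMap.inr k A H (l h b) := by
    simp
  have hAA1_inr_inl := congrArg (TensorProduct.map (LinearMap.inr k A H) (LinearMap.inl k A H))
    (hAA1 h b)
  have hAA1_inl_inr := congrArg (TensorProduct.map (LinearMap.inl k A H) (LinearMap.inr k A H))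
    hAA1_flip
  rw [hbr, map_add, bbCobracket_inl, bbCobracket_inr, bbCobracket_inl, bbCobracket_inr, hcoA,
    hcoH]
  simp only [adTensor, LinearMap.add_apply, LinearMap.rTensor_map, LinearMap.lTensor_map,
    bbBracket_inr_comp_inl, bbBracket_inl_comp_inr, TensorProduct.map_add_left,
    TensorProduct.map_add_right, TensorProduct.map_neg_left, TensorProduct.map_neg_right,
    LinearMap.neg_apply, TensorProduct.map_map, map_add, LinearMap.comp_id, map_zero]
    at hAA1_inr_inl hAA1_inl_inr ⊢
  linear_combination (norm := module) -hAA1_inr_inl - hAA1_inl_inr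

end DoubleCrossSum

theorem double_cross_sum_is_lie_bialgebra_general
    (brA : A →ₗ[k] A →ₗ[k] A) (δA : A →ₗ[k] A ⊗[k] A)
    (brH : H →ₗ[k] H →ₗ[k] H) (δH : H →ₗ[k] H ⊗[k] H)
    (r : H →ₗ[k] A →ₗ[k] A) (l : H →ₗ[k] A →ₗ[k] H)
    (hA : IsLieBialg brA δA) (hH : IsLieBialg brH δH)
    -- `A` is a left `H`-module
    (hmodA : ∀ h g a, r (brH h g) a = r h (r g a) - r g (r h a))
    -- `H` is a right `A`-module
    (hmodH : ∀ h a b, l h (brA a b) = l (l h a) b - l (l h b) a)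
    -- (BB1) : `h ▷ [a,b] = [h▷a, b] + [a, h▷b] + (h◁a)▷b − (h◁b)▷a`
    (hBB1 : ∀ h a b, r h (brA a b)
        = brA (r h a) b + brA a (r h b) + r (l h a) b - r (l h b) a)
    -- (BB2) : `[h,g] ◁ a = [h, g◁a] + [h◁a, g] + h◁(g▷a) − g◁(h▷a)`
    (hBB2 : ∀ h g a, l (brH h g) a
        = brH h (l g a) + brH (l h a) g + l h (r g a) - l g (r h a))
    -- `A` is a left `H`-module Lie coalgebra: `δ_A(h▷a) = h▷a₁ ⊗ a₂ + a₁ ⊗ h▷a₂`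
    (hcoA : ∀ h a, δA (r h a)
        = TensorProduct.map (r h) LinearMap.id (δA a)
        + TensorProduct.map LinearMap.id (r h) (δA a))
    -- `H` is a right `A`-module Lie coalgebra: `δ_H(h◁a) = h₁◁a ⊗ h₂ + h₁ ⊗ h₂◁a`
    (hcoH : ∀ h a, δH (l h a)
        = TensorProduct.map (l.flip a) LinearMap.id (δH h)
        + TensorProduct.map LinearMap.id (l.flip a) (δH h))
    -- (AA1) : `h₁ ⊗ (h₂ ▷ a) + (h ◁ a₁) ⊗ a₂ = 0` in `H ⊗ A`
    (hAA1 : ∀ h a, TensorProduct.map LinearMap.id (r.flip a) (δH h)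
        + TensorProduct.map (l h) LinearMap.id (δA a) = 0) :
    IsLieBialg (bbBracket brA brH r l 0 0) (bbCobracket δA δH 0 0 0 0) := by
  have hD := isLieAlg_bbBracket brA brH r l hA.1 hH.1 hmodA hmodH hBB1 hBB2
  rw [isLieBialg_iff_cocycle hA.1] at hA
  rw [isLieBialg_iff_cocycle hH.1] at hH
  obtain ⟨hA_coalg, hA_cocycle⟩ := hA
  obtain ⟨hH_coalg, hH_cocycle⟩ := hH
  rw [isLieBialg_iff_cocycle hD]
  refine ⟨isLieCoalg_bbCobracket δA δH hA_coalg hH_coalg, cocycle_of_inl_inr hD.1 ?_ ?_ ?_⟩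
  · intro a b
    exact cocycle_map (bbBracket_inl_inl brA brH r l) (bbCobracket_inl δA δH) (hA_cocycle a b)
  · exact bbCobracket_cocycle_inr_inl brA brH r l δA δH hA_coalg.1 hH_coalg.1 hcoA hcoH hAA1
  · intro h g
    exact cocycle_map (bbBracket_inr_inr brA brH r l) (bbCobracket_inr δA δH) (hH_cocycle h g)

/-- Given Lie bialgebras `A`, `H`, a matched pair of Lie algebras
`(A, H, ▷, ◁)`, with `A` a left `H`-module Lie coalgebra, `H` a right `A`-module Lie
coalgebra, and condition (AA1), the double cross sum `A ⋈ H` is a Lie bialgebra. -/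
theorem double_cross_sum_is_lie_bialgebra [CharZero k]
    (brA : A →ₗ[k] A →ₗ[k] A) (δA : A →ₗ[k] A ⊗[k] A)
    (brH : H →ₗ[k] H →ₗ[k] H) (δH : H →ₗ[k] H ⊗[k] H)
    (r : H →ₗ[k] A →ₗ[k] A) (l : H →ₗ[k] A →ₗ[k] H)
    (hA : IsLieBialg brA δA) (hH : IsLieBialg brH δH)
    -- `A` is a left `H`-module
    (hmodA : ∀ h g a, r (brH h g) a = r h (r g a) - r g (r h a))
    -- `H` is a right `A`-module
    (hmodH : ∀ h a b, l h (brA a b) = l (l h a) b - l (l h b) a)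
    -- (BB1) : `h ▷ [a,b] = [h▷a, b] + [a, h▷b] + (h◁a)▷b − (h◁b)▷a`
    (hBB1 : ∀ h a b, r h (brA a b)
        = brA (r h a) b + brA a (r h b) + r (l h a) b - r (l h b) a)
    -- (BB2) : `[h,g] ◁ a = [h, g◁a] + [h◁a, g] + h◁(g▷a) − g◁(h▷a)`
    (hBB2 : ∀ h g a, l (brH h g) a
        = brH h (l g a) + brH (l h a) g + l h (r g a) - l g (r h a))
    -- `A` is a left `H`-module Lie coalgebra: `δ_A(h▷a) = h▷a₁ ⊗ a₂ + a₁ ⊗ h▷a₂`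
    (hcoA : ∀ h a, δA (r h a)
        = TensorProduct.map (r h) LinearMap.id (δA a)
        + TensorProduct.map LinearMap.id (r h) (δA a))
    -- `H` is a right `A`-module Lie coalgebra: `δ_H(h◁a) = h₁◁a ⊗ h₂ + h₁ ⊗ h₂◁a`
    (hcoH : ∀ h a, δH (l h a)
        = TensorProduct.map (l.flip a) LinearMap.id (δH h)
        + TensorProduct.map LinearMap.id (l.flip a) (δH h))
    -- (AA1) : `h₁ ⊗ (h₂ ▷ a) + (h ◁ a₁) ⊗ a₂ = 0` in `H ⊗ A`
    (hAA1 : ∀ h a, TensorProduct.map LinearMap.id (r.flip a) (δH h)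
        + TensorProduct.map (l h) LinearMap.id (δA a) = 0) :
    IsLieBialg (bbBracket brA brH r l 0 0) (bbCobracket δA δH 0 0 0 0) :=
  double_cross_sum_is_lie_bialgebra_general brA δA brH δH r l hA hH hmodA hmodH hBB1 hBB2 hcoA hcoH
    hAA1

end
end

section
/- Let A and H be Lie bialgebras and ω : H ⊗ A → k a skew-pairing, i.e. ω([h,g], a) = ω(h, a₁)ω(g, a₂) and ω(h, [a,b]) = ω(h₁, b)ω(h₂, a) for all h, g ∈ H, a, b ∈ A. Then the bilinear map ◁ : H × A → H defined by h ◁ a := ω(h₂, a) h₁ makes H a right A-module, i.e. h ◁ [a,b] = (h ◁ a) ◁ b − (h ◁ b) ◁ a for all h ∈ H and a, b ∈ A. -/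
open TensorProduct

noncomputable section

variable {k : Type*} [Field k]
variable {A H : Type*} [AddCommGroup A] [Module k A] [AddCommGroup H] [Module k H]

/-- The right action `h ◁ a := ω(h₂, a) h₁` defined from a pairing `ω` and the cobracket of
`H` (Sweedler notation `δ_H h = h₁ ⊗ h₂`). -/
def pairingLact (δH : H →ₗ[k] H ⊗[k] H) (ω : H →ₗ[k] A →ₗ[k] k) : H →ₗ[k] A →ₗ[k] H :=
  LinearMap.mk₂ k
    (fun h a => TensorProduct.rid k H
      (TensorProduct.map LinearMap.id (ω.flip a) (δH h)))
    (fun h h' a => by simp [map_add])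
    (fun c h a => by simp [map_smul])
    (fun h a a' => by simp [map_add, TensorProduct.map_add_right])
    (fun c h a => by simp [map_smul, TensorProduct.map_smul_right])

/-- The left action `h ▷ a := ω(h, a₂) a₁` defined from a pairing `ω` and the cobracket of
`A` (Sweedler notation `δ_A a = a₁ ⊗ a₂`). -/
def pairingRact (δA : A →ₗ[k] A ⊗[k] A) (ω : H →ₗ[k] A →ₗ[k] k) : H →ₗ[k] A →ₗ[k] A :=
  LinearMap.mk₂ k
    (fun h a => TensorProduct.rid k A
      (TensorProduct.map LinearMap.id (ω h) (δA a)))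
    (fun h h' a => by simp [map_add, TensorProduct.map_add_right])
    (fun c h a => by simp [map_smul, TensorProduct.map_smul_right])
    (fun h a a' => by simp [map_add])
    (fun c h a => by simp [map_smul])

/-!
Write `ρ f h := h₁ f(h₂)` for `f ∈ H*`, so that `h ◁ a = ρ (ω(·, a)) h`. The second
skew-pairing axiom says `ω(·, [a, b]) = [ω(·, b), ω(·, a)]` for the bracket
`[f, g](h) = f(h₁) g(h₂)` of the dual Lie algebra `H*`, so it suffices that
`ρ [f, g] = ρ f ∘ ρ g - ρ g ∘ ρ f`. This comes from applying `x ⊗ y ⊗ z ↦ f(y) g(z) x` to the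
co-Jacobi identity for `h`: the three cyclic terms give `ρ f (ρ g h)`, `-ρ g (ρ f h)` and
`-ρ [f, g] h`, the signs coming from coanticommutativity.
-/

section Contraction

variable {L : Type*} [AddCommGroup L] [Module k L] (δ : L →ₗ[k] L ⊗[k] L)

def rightContract (f : L →ₗ[k] k) : L →ₗ[k] L :=
  (TensorProduct.rid k L).toLinearMap ∘ₗ TensorProduct.map LinearMap.id f ∘ₗ δ

/-- The bracket `[f, g](x) = f(x₁) g(x₂)` of the dual Lie algebra `L*`. -/
def dualBracket (f g : L →ₗ[k] k) : L →ₗ[k] k :=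
  LinearMap.mul' k k ∘ₗ TensorProduct.map f g ∘ₗ δ

/-- `x ⊗ y ⊗ z ↦ f(y) g(z) x`. -/
def rightContract₂ (f g : L →ₗ[k] k) : (L ⊗[k] L) ⊗[k] L →ₗ[k] L :=
  (TensorProduct.rid k L).toLinearMap
    ∘ₗ TensorProduct.map
        ((TensorProduct.rid k L).toLinearMap ∘ₗ TensorProduct.map LinearMap.id f) g

variable {δ}

theorem lid_map_eq_neg_rightContract (hδ : ∀ x, TensorProduct.comm k L L (δ x) = - δ x)
    (f : L →ₗ[k] k) (x : L) :
    TensorProduct.lid k L (TensorProduct.map f LinearMap.id (δ x)) = - rightContract δ f x := by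
  have lid_eq_rid_comm : (TensorProduct.lid k L).toLinearMap ∘ₗ TensorProduct.map f LinearMap.id
      = (TensorProduct.rid k L).toLinearMap ∘ₗ TensorProduct.map LinearMap.id f
          ∘ₗ (TensorProduct.comm k L L).toLinearMap :=
    TensorProduct.ext' fun x y => by simp
  simpa [hδ, rightContract] using LinearMap.congr_fun lid_eq_rid_comm (δ x)

theorem rid_map_apply (φ : L →ₗ[k] L) (f : L →ₗ[k] k) (t : L ⊗[k] L) :
    TensorProduct.rid k L (TensorProduct.map φ f t)
      = φ (TensorProduct.rid k L (TensorProduct.map LinearMap.id f t)) := by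
  induction t using TensorProduct.induction_on <;> simp_all

theorem rightContract₂_comp_ξmap (f g : L →ₗ[k] k) :
    rightContract₂ f g ∘ₗ ξmap k L
      = (TensorProduct.rid k L).toLinearMap
          ∘ₗ TensorProduct.map
              ((TensorProduct.lid k L).toLinearMap ∘ₗ TensorProduct.map g LinearMap.id) f :=
  TensorProduct.ext_threefold fun x y z => by
    simp [rightContract₂, ξmap, smul_smul, mul_comm]

theorem rightContract₂_comp_ξmap_comp_ξmap (f g : L →ₗ[k] k) :
    rightContract₂ f g ∘ₗ ξmap k L ∘ₗ ξmap k L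
      = (TensorProduct.lid k L).toLinearMap
          ∘ₗ TensorProduct.map (LinearMap.mul' k k ∘ₗ TensorProduct.map f g) LinearMap.id :=
  TensorProduct.ext_threefold fun x y z => by
    simp [rightContract₂, ξmap, smul_smul, mul_comm]

theorem rightContract_dualBracket (hδ : IsLieCoalg δ) (f g : L →ₗ[k] k) :
    rightContract δ (dualBracket δ f g)
      = rightContract δ f ∘ₗ rightContract δ g - rightContract δ g ∘ₗ rightContract δ f := by
  obtain ⟨hanti, hjac⟩ := hδ
  ext x
  set T := TensorProduct.map δ LinearMap.id (δ x)
  have contract_T : rightContract₂ f g T = rightContract δ f (rightContract δ g x) := by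
    simp only [T, rightContract₂, LinearMap.comp_apply, LinearEquiv.coe_coe,
      TensorProduct.map_map, LinearMap.comp_id]
    exact rid_map_apply (rightContract δ f) g (δ x)
  have contract_ξT :
      rightContract₂ f g (ξmap k L T) = -rightContract δ g (rightContract δ f x) := by
    rw [← LinearMap.comp_apply, rightContract₂_comp_ξmap]
    simp only [T, LinearMap.comp_apply, LinearEquiv.coe_coe, TensorProduct.map_map,
      LinearMap.comp_id]
    rw [rid_map_apply]
    exact lid_map_eq_neg_rightContract hanti g _
  have contract_ξξT :
      rightContract₂ f g (ξmap k L (ξmap k L T)) = -rightContract δ (dualBracket δ f g) x := by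
    rw [← LinearMap.comp_apply (ξmap k L), ← LinearMap.comp_apply,
      rightContract₂_comp_ξmap_comp_ξmap]
    simp only [T, LinearMap.comp_apply, LinearEquiv.coe_coe, TensorProduct.map_map,
      LinearMap.comp_id]
    exact lid_map_eq_neg_rightContract hanti _ x
  have cojacobi := congrArg (rightContract₂ f g) (hjac x)
  rw [map_add, map_add, map_zero, contract_T, contract_ξT, contract_ξξT] at cojacobi
  simp only [LinearMap.sub_apply, LinearMap.comp_apply]
  linear_combination (norm := abel) -cojacobi

end Contraction

theorem skew_pairing_right_module_general
    (brA : A →ₗ[k] A →ₗ[k] A)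
    (brH : H →ₗ[k] H →ₗ[k] H) (δH : H →ₗ[k] H ⊗[k] H)
    (ω : H →ₗ[k] A →ₗ[k] k)
    (hH : IsLieBialg brH δH)
    -- and `ω(h, [a,b]) = ω(h₁, b) ω(h₂, a)`
    (hω2 : ∀ h a b, ω h (brA a b)
        = LinearMap.mul' k k (TensorProduct.map (ω.flip b) (ω.flip a) (δH h))) :
    ∀ h a b, pairingLact δH ω h (brA a b)
      = pairingLact δH ω (pairingLact δH ω h a) b
      - pairingLact δH ω (pairingLact δH ω h b) a := by
  have lact_eq : ∀ h a, pairingLact δH ω h a = rightContract δH (ω.flip a) h := fun _ _ => rfl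
  have flip_brA : ∀ a b, ω.flip (brA a b) = dualBracket δH (ω.flip b) (ω.flip a) :=
    fun a b => LinearMap.ext fun h => hω2 h a b
  intro h a b
  simp only [lact_eq, flip_brA, rightContract_dualBracket hH.2.1, LinearMap.sub_apply,
    LinearMap.comp_apply]

/-- For a skew-pairing `ω : H ⊗ A → k` between Lie bialgebras,
`h ◁ a := ω(h₂, a) h₁` makes `H` a right `A`-module. -/
theorem skew_pairing_right_module [CharZero k]
    (brA : A →ₗ[k] A →ₗ[k] A) (δA : A →ₗ[k] A ⊗[k] A)
    (brH : H →ₗ[k] H →ₗ[k] H) (δH : H →ₗ[k] H ⊗[k] H)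
    (ω : H →ₗ[k] A →ₗ[k] k)
    (hA : IsLieBialg brA δA) (hH : IsLieBialg brH δH)
    -- `ω` is a skew-pairing:  `ω([h,g], a) = ω(h, a₁) ω(g, a₂)`
    (hω1 : ∀ h g a, ω (brH h g) a
        = LinearMap.mul' k k (TensorProduct.map (ω h) (ω g) (δA a)))
    -- and `ω(h, [a,b]) = ω(h₁, b) ω(h₂, a)`
    (hω2 : ∀ h a b, ω h (brA a b)
        = LinearMap.mul' k k (TensorProduct.map (ω.flip b) (ω.flip a) (δH h))) :
    ∀ h a b, pairingLact δH ω h (brA a b)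
      = pairingLact δH ω (pairingLact δH ω h a) b
      - pairingLact δH ω (pairingLact δH ω h b) a :=
  skew_pairing_right_module_general brA brH δH ω hH hω2

end
end
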